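/- arXiv:2304.11198 — 3 statements merged into one kernel-verified Lean document; each statement's English description precedes it below -/
import Mathlib

section
/- Consider the closed-loop system described in the context. If the feasibility conditions φ_i < (ḡ_i + g̲_i)·v̄_i + μ_i·(q_i − p_i) hold for every i ∈ {1,…,n}, and the initial conditions satisfy |z_i(0)| < ψ_i(0) for every i ∈ {1,…,n}, then for all t ≥ 0 and all i ∈ {1,…,n} one has |z_i(t)| < ψ_i(t); in particular the output tracking error satisfies |z_1(t)| < ψ_1(t) for all t ≥ 0, the control input satisfies |υ_n(t)| < v̄_n for all t ≥ 0, and all closed-loop signals t ↦ ξ_i(t), z_i(t), θ_i(t), υ_i(t) are bounded on [0, ∞). -/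
/-!
Inside the funnels `|z_i| < ψ_i` every signal is bounded a priori (`|ξ_i| ≤ p_i + v̄_{i-1}`,
`|υ_i| < v̄_i`), so by induction on `i` the derivative of `z_i` is bounded by `φ_i` and that of
`υ_i` by `r_i`. As `|θ_i| → 1` the control `υ_i` tends to `∓v̄_i`, and the feasibility condition
then makes `|z_i| - ψ_i` strictly decreasing. Hence at a first time `τ` where some funnel is
reached, for the least such `i` (so that `z_i` is still continuous at `τ`), `|z_i| - ψ_i` was
negative and decreasing just before `τ`, which is absurd; continuous induction on `[0, ∞)`
concludes.
-/

open Real Set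

/-- The truncated state vector `ξ̄_i(t) = (ξ_1(t), …, ξ_i(t))` as an element of
`EuclideanSpace ℝ (Fin i)` (states are indexed `1, …, n`). -/
noncomputable def xibar (ξ : ℕ → ℝ → ℝ) (i : ℕ) (t : ℝ) : EuclideanSpace ℝ (Fin i) :=
  WithLp.toLp 2 (fun j => ξ (j.1 + 1) t)

/-- The vector `δ_i = (p_1 + v̄_0, …, p_i + v̄_{i−1})` in `EuclideanSpace ℝ (Fin i)`. -/
noncomputable def deltaVec (p vbar : ℕ → ℝ) (i : ℕ) : EuclideanSpace ℝ (Fin i) :=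
  WithLp.toLp 2 (fun j => p (j.1 + 1) + vbar j.1)

open Filter Topology

noncomputable def controlLaw (v c x : ℝ) : ℝ :=
  -(2 * v / π) * arctan (π / (2 * c) * tan (π / 2 * x))

section ControlLaw

variable {v c : ℝ}

theorem abs_controlLaw_lt (hv : 0 < v) (x : ℝ) : |controlLaw v c x| < v := by
  have harctan : |arctan (π / (2 * c) * tan (π / 2 * x))| < π / 2 :=
    abs_lt.2 ⟨neg_pi_div_two_lt_arctan _, arctan_lt_pi_div_two _⟩
  calc |controlLaw v c x| = 2 * v / π * |arctan (π / (2 * c) * tan (π / 2 * x))| := by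
        rw [controlLaw, abs_mul, abs_neg, abs_of_pos (by positivity)]
    _ < 2 * v / π * (π / 2) := by gcongr
    _ = v := by field_simp

theorem controlLaw_neg (x : ℝ) : controlLaw v c (-x) = -controlLaw v c x := by
  simp only [controlLaw, mul_neg, tan_neg, arctan_neg]

theorem tendsto_controlLaw_nhdsLT_one (hc : 0 < c) :
    Tendsto (controlLaw v c) (𝓝[<] 1) (𝓝 (-v)) := by
  have hscale : Tendsto (fun x : ℝ => π / 2 * x) (𝓝[<] 1) (𝓝[<] (π / 2)) := by
    refine tendsto_nhdsWithin_of_tendsto_nhds_of_eventually_within _ ?_ ?_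
    · simpa using ((continuous_const_mul (π / 2)).tendsto 1).mono_left nhdsWithin_le_nhds
    · filter_upwards [self_mem_nhdsWithin] with x (hx : x < 1)
      show π / 2 * x < π / 2
      nlinarith [pi_pos]
  have harctan := (tendsto_arctan_atTop.mono_right nhdsWithin_le_nhds).comp
    ((tendsto_tan_pi_div_two.comp hscale).const_mul_atTop (by positivity : 0 < π / (2 * c)))
  have hlim : -(2 * v / π) * (π / 2) = -v := by field_simp
  rw [← hlim]
  exact harctan.const_mul _

/-- The factor `a (1 + T²) / (1 + (a T)²)` produced by the chain rule through `arctan ∘ tan`. -/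
theorem mul_one_add_sq_div_le_max {a : ℝ} (ha : 0 < a) (T : ℝ) :
    a * (1 + T ^ 2) / (1 + (a * T) ^ 2) ≤ max a a⁻¹ := by
  rw [div_le_iff₀ (by positivity)]
  have key : a * T ^ 2 = a⁻¹ * (a * T) ^ 2 := by field_simp
  nlinarith [le_max_left a a⁻¹, le_max_right a a⁻¹, sq_nonneg (a * T), sq_nonneg T]

theorem exists_hasDerivAt_controlLaw (hv : 0 ≤ v) (hc : 0 < c) {x : ℝ} (hx : |x| < 1) :
    ∃ D, HasDerivAt (controlLaw v c) D x ∧ |D| ≤ max (π * v / (2 * c)) (2 * v * c / π) := by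
  set a := π / (2 * c)
  set T := tan (π / 2 * x)
  have ha : 0 < a := by positivity
  have hcos : cos (π / 2 * x) ≠ 0 := by
    refine (cos_pos_of_mem_Ioo ⟨?_, ?_⟩).ne' <;> nlinarith [abs_lt.1 hx, pi_pos]
  have hsec : 1 / cos (π / 2 * x) ^ 2 = 1 + T ^ 2 := by
    rw [← inv_one_add_tan_sq hcos, one_div, inv_inv]
  have hderiv : HasDerivAt (controlLaw v c) (-(v * (a * (1 + T ^ 2) / (1 + (a * T) ^ 2)))) x := by
    refine ((((hasDerivAt_tan hcos).comp x ((hasDerivAt_id x).const_mul (π / 2))).const_mul a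
      |>.arctan).const_mul (-(2 * v / π))).congr_deriv ?_
    simp only [Function.comp_apply, ← hsec, T]
    field_simp
  refine ⟨_, hderiv, ?_⟩
  rw [abs_neg, abs_of_nonneg (by positivity)]
  calc v * (a * (1 + T ^ 2) / (1 + (a * T) ^ 2)) ≤ v * max a a⁻¹ := by
        gcongr; exact mul_one_add_sq_div_le_max ha T
    _ = max (π * v / (2 * c)) (2 * v * c / π) := by
        rw [mul_max_of_nonneg _ _ hv]; simp only [a]; congr 1 <;> field_simp

end ControlLaw

noncomputable def perfFun (p q μ t : ℝ) : ℝ := (p - q) * exp (-μ * t) + q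

section PerformanceFunction

variable {p q μ t : ℝ}

theorem le_perfFun (hqp : q ≤ p) : q ≤ perfFun p q μ t := by
  unfold perfFun; nlinarith [exp_pos (-μ * t)]

theorem perfFun_le (hqp : q ≤ p) (hμ : 0 ≤ μ) (ht : 0 ≤ t) : perfFun p q μ t ≤ p := by
  have : exp (-μ * t) ≤ 1 := exp_le_one_iff.2 (by nlinarith)
  unfold perfFun; nlinarith

theorem continuous_perfFun : Continuous (perfFun p q μ) := by
  unfold perfFun; fun_prop

theorem hasDerivAt_perfFun (t : ℝ) :
    HasDerivAt (perfFun p q μ) (-μ * ((p - q) * exp (-μ * t))) t := by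
  have h := (((hasDerivAt_id t).const_mul (-μ)).exp.const_mul (p - q)).add_const q
  exact h.congr_deriv (by simp only [id]; ring)

theorem perfFun_decay_le (hqp : q ≤ p) (hμ : 0 ≤ μ) (ht : 0 ≤ t) :
    μ * ((p - q) * exp (-μ * t)) ≤ μ * (p - q) := by
  have : exp (-μ * t) ≤ 1 := exp_le_one_iff.2 (by nlinarith)
  exact mul_le_mul_of_nonneg_left (mul_le_of_le_one_right (sub_nonneg.2 hqp) this) hμ

/-- The relative decay rate `|ψ'| / ψ` of a performance function is largest at `t = 0`. -/
theorem perfFun_decay_div_le (hq : 0 < q) (hqp : q ≤ p) (hμ : 0 ≤ μ) (ht : 0 ≤ t) :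
    μ * ((p - q) * exp (-μ * t)) / perfFun p q μ t ≤ μ * (p - q) / p := by
  have hE : exp (-μ * t) ≤ 1 := exp_le_one_iff.2 (by nlinarith)
  have hψ : 0 < perfFun p q μ t := hq.trans_le (le_perfFun hqp)
  rw [div_le_div_iff₀ hψ (hq.trans_le hqp), perfFun]
  nlinarith [mul_nonneg (mul_nonneg (mul_nonneg hμ (sub_nonneg.2 hqp)) hq.le) (sub_nonneg.2 hE)]

theorem exists_hasDerivAt_div_perfFun {z : ℝ → ℝ} {z' φ : ℝ} (hq : 0 < q) (hqp : q ≤ p)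
    (hμ : 0 ≤ μ) (ht : 0 ≤ t) (hz : HasDerivAt z z' t) (hz' : |z'| ≤ φ)
    (hzψ : |z t| ≤ perfFun p q μ t) :
    ∃ θ', HasDerivAt (fun s => z s / perfFun p q μ s) θ' t ∧
      |θ'| ≤ φ / q + μ * (p - q) / p := by
  set ψ := perfFun p q μ t
  set W := μ * ((p - q) * exp (-μ * t))
  have hψ : 0 < ψ := hq.trans_le (le_perfFun hqp)
  have hW : 0 ≤ W := by have := exp_pos (-μ * t); have := sub_nonneg.2 hqp; positivity
  refine ⟨_, hz.div (hasDerivAt_perfFun t) hψ.ne', ?_⟩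
  have hsplit : (z' * ψ - z t * (-μ * ((p - q) * exp (-μ * t)))) / ψ ^ 2 =
      z' / ψ + z t / ψ * (W / ψ) := by simp only [W]; field_simp; ring
  rw [hsplit]
  have hθ : |z t / ψ| ≤ 1 := by
    rw [abs_div, abs_of_pos hψ]; exact div_le_one_of_le₀ hzψ hψ.le
  calc |z' / ψ + z t / ψ * (W / ψ)| ≤ |z'| / ψ + 1 * (W / ψ) := by
        refine (abs_add_le _ _).trans ?_
        rw [abs_div, abs_of_pos hψ, abs_mul, abs_of_nonneg (div_nonneg hW hψ.le)]
        gcongr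
    _ ≤ φ / q + μ * (p - q) / p := by
        rw [one_mul]
        exact add_le_add (div_le_div₀ ((abs_nonneg _).trans hz') hz' hq (le_perfFun hqp))
          (perfFun_decay_div_le hq hqp hμ ht)

end PerformanceFunction

theorem forall_ge_of_continuous_induction {P : ℝ → Prop} {a : ℝ}
    (hstep : ∀ t ≥ a, (∀ s ∈ Ico a t, P s) → P t)
    (hopen : ∀ t ≥ a, P t → ∀ᶠ s in 𝓝[>] t, P s) : ∀ t ≥ a, P t := by
  by_contra! hbad
  set S := {t | a ≤ t ∧ ¬P t}
  have hS : S.Nonempty := let ⟨t, ht, hPt⟩ := hbad; ⟨t, ht, hPt⟩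
  have hbdd : BddBelow S := ⟨a, fun _ hs => hs.1⟩
  set τ := sInf S
  have haτ : a ≤ τ := le_csInf hS fun _ hs => hs.1
  have hbefore : ∀ s ∈ Ico a τ, P s := fun s hs => by
    by_contra hPs
    exact (csInf_le hbdd ⟨hs.1, hPs⟩).not_gt hs.2
  have hτ : P τ := hstep τ haτ hbefore
  obtain ⟨u, hτu, hu⟩ := mem_nhdsGT_iff_exists_Ioo_subset.1 (hopen τ haτ hτ)
  obtain ⟨s, ⟨hsa, hPs⟩, hsu⟩ := exists_lt_of_csInf_lt hS hτu
  rcases (csInf_le hbdd ⟨hsa, hPs⟩).eq_or_lt with hτs | hτs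
  · exact hPs (hτs ▸ hτ)
  · exact hPs (hu ⟨hτs, hsu⟩)

theorem neg_of_eventually_hasDerivAt_neg {h : ℝ → ℝ} {τ : ℝ} (hcont : ContinuousAt h τ)
    (hev : ∀ᶠ s in 𝓝[<] τ, h s < 0 ∧ ∃ D < 0, HasDerivAt h D s) : h τ < 0 := by
  obtain ⟨σ, hστ, hσ⟩ := mem_nhdsLT_iff_exists_Ioo_subset.1 hev
  obtain ⟨σ', hσσ', hσ'τ⟩ := exists_between (α := ℝ) hστ
  have hanti : StrictAntiOn h (Icc σ' τ) := by
    refine strictAntiOn_of_deriv_neg (convex_Icc σ' τ) (fun x hx => ?_) (fun x hx => ?_)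
    · rcases hx.2.eq_or_lt with rfl | hxτ
      · exact hcont.continuousWithinAt
      · obtain ⟨-, D, -, hD⟩ := hσ ⟨hσσ'.trans_le hx.1, hxτ⟩
        exact hD.continuousAt.continuousWithinAt
    · rw [interior_Icc] at hx
      obtain ⟨-, D, hD0, hD⟩ := hσ ⟨hσσ'.trans hx.1, hx.2⟩
      rwa [hD.deriv]
  exact (hanti ⟨le_rfl, hσ'τ.le⟩ ⟨hσ'τ.le, le_rfl⟩ hσ'τ).trans
    (hσ ⟨hσσ', hσ'τ⟩).1

theorem EuclideanSpace.norm_le_norm_of_abs_le {ι : Type*} [Fintype ι]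
    {x y : EuclideanSpace ℝ ι} (h : ∀ j, |x j| ≤ |y j|) : ‖x‖ ≤ ‖y‖ := by
  rw [EuclideanSpace.norm_eq, EuclideanSpace.norm_eq]
  gcongr with j
  exact h j

/-- The closed loop, indexed `1, …, n`; the reference `y_d` enters as `υ 0` and `r₀` as `r 0`. -/
structure ClosedLoop where
  n : ℕ
  (k glo ghi dbar p q μ vbar c : ℕ → ℝ)
  (f g : (i : ℕ) → EuclideanSpace ℝ (Fin i) → ℝ)
  d : ℕ → ℝ → ℝ
  (ξ ξ' υ z θ ψ : ℕ → ℝ → ℝ)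
  (φ r : ℕ → ℝ)
  k_nonneg : ∀ i ∈ Finset.Icc 1 n, 0 ≤ k i
  abs_f_le : ∀ i ∈ Finset.Icc 1 n, ∀ x, |f i x| ≤ k i * ‖x‖
  glo_nonneg : ∀ i ∈ Finset.Icc 1 n, 0 ≤ glo i
  g_mem : ∀ i ∈ Finset.Icc 1 n, ∀ x, glo i ≤ g i x ∧ g i x ≤ ghi i
  abs_d_le : ∀ i ∈ Finset.Icc 1 n, ∀ t, 0 ≤ t → |d i t| ≤ dbar i
  abs_υ_zero_le : ∀ t, 0 ≤ t → |υ 0 t| ≤ vbar 0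
  exists_hasDerivAt_υ_zero : ∀ t, 0 ≤ t → ∃ u', HasDerivAt (υ 0) u' t ∧ |u'| ≤ r 0
  q_pos : ∀ i ∈ Finset.Icc 1 n, 0 < q i
  q_le_p : ∀ i ∈ Finset.Icc 1 n, q i ≤ p i
  μ_nonneg : ∀ i ∈ Finset.Icc 1 n, 0 ≤ μ i
  ψ_eq : ∀ i ∈ Finset.Icc 1 n, ψ i = perfFun (p i) (q i) (μ i)
  vbar_pos : ∀ i ∈ Finset.Icc 1 n, 0 < vbar i
  c_pos : ∀ i ∈ Finset.Icc 1 n, 0 < c i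
  z_eq : ∀ i ∈ Finset.Icc 1 n, z i = fun t => ξ i t - υ (i - 1) t
  θ_eq : ∀ i ∈ Finset.Icc 1 n, θ i = fun t => z i t / ψ i t
  υ_eq : ∀ i ∈ Finset.Icc 1 n, υ i = fun t => controlLaw (vbar i) (c i) (θ i t)
  hasDerivAt_ξ : ∀ i ∈ Finset.Icc 1 n, ∀ t, 0 ≤ t → HasDerivAt (ξ i) (ξ' i t) t
  ξ'_eq : ∀ i ∈ Finset.Icc 1 (n - 1), ∀ t, 0 ≤ t →
    ξ' i t = f i (xibar ξ i t) + g i (xibar ξ i t) * ξ (i + 1) t + d i t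
  ξ'_eq_last : ∀ t, 0 ≤ t →
    ξ' n t = f n (xibar ξ n t) + g n (xibar ξ n t) * υ n t + d n t
  φ_eq : ∀ i ∈ Finset.Icc 1 (n - 1),
    φ i = k i * ‖deltaVec p vbar i‖ + dbar i + ghi i * p (i + 1) + ghi i * vbar i + r (i - 1)
  φ_eq_last : φ n = k n * ‖deltaVec p vbar n‖ + dbar n + ghi n * vbar n + r (n - 1)
  r_eq : ∀ i ∈ Finset.Icc 1 n,
    r i = (φ i / q i + μ i * (p i - q i) / p i) *
      max (π * vbar i / (2 * c i)) (2 * vbar i * c i / π)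
  feasible : ∀ i ∈ Finset.Icc 1 n, φ i < (ghi i + glo i) * vbar i + μ i * (q i - p i)

namespace ClosedLoop

variable (S : ClosedLoop) {i : ℕ} {t τ : ℝ}

def InFunnel (t : ℝ) : Prop := ∀ i ∈ Finset.Icc 1 S.n, |S.z i t| < S.ψ i t

theorem ψ_pos (hi : i ∈ Finset.Icc 1 S.n) (t : ℝ) : 0 < S.ψ i t := by
  rw [S.ψ_eq i hi]; exact (S.q_pos i hi).trans_le (le_perfFun (S.q_le_p i hi))

theorem continuous_ψ (hi : i ∈ Finset.Icc 1 S.n) : Continuous (S.ψ i) := by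
  rw [S.ψ_eq i hi]; exact continuous_perfFun

theorem abs_z_le_p (hi : i ∈ Finset.Icc 1 S.n) (ht : 0 ≤ t) (hz : |S.z i t| < S.ψ i t) :
    |S.z i t| ≤ S.p i := by
  refine hz.le.trans ?_
  rw [S.ψ_eq i hi]; exact perfFun_le (S.q_le_p i hi) (S.μ_nonneg i hi) ht

theorem abs_θ_lt_one (hi : i ∈ Finset.Icc 1 S.n) (hz : |S.z i t| < S.ψ i t) :
    |S.θ i t| < 1 := by
  rw [S.θ_eq i hi, abs_div, abs_of_pos (S.ψ_pos hi t)]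
  exact (div_lt_one (S.ψ_pos hi t)).2 hz

theorem abs_υ_lt (hi : i ∈ Finset.Icc 1 S.n) (t : ℝ) : |S.υ i t| < S.vbar i := by
  rw [S.υ_eq i hi]; exact abs_controlLaw_lt (S.vbar_pos i hi) _

theorem abs_υ_pred_le (hi : i ∈ Finset.Icc 1 S.n) (ht : 0 ≤ t) :
    |S.υ (i - 1) t| ≤ S.vbar (i - 1) := by
  obtain ⟨hi1, hin⟩ := Finset.mem_Icc.1 hi
  rcases hi1.eq_or_lt with rfl | hi1
  · exact S.abs_υ_zero_le t ht
  · exact (S.abs_υ_lt (Finset.mem_Icc.2 ⟨by omega, by omega⟩) t).le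

theorem abs_ξ_le (hi : i ∈ Finset.Icc 1 S.n) (ht : 0 ≤ t) (hz : |S.z i t| < S.ψ i t) :
    |S.ξ i t| ≤ S.p i + S.vbar (i - 1) := by
  have hξ : S.ξ i t = S.z i t + S.υ (i - 1) t := by rw [S.z_eq i hi]; ring
  rw [hξ]
  exact (abs_add_le _ _).trans (add_le_add (S.abs_z_le_p hi ht hz) (S.abs_υ_pred_le hi ht))

theorem norm_xibar_le (hi : i ∈ Finset.Icc 1 S.n) (ht : 0 ≤ t) (hP : S.InFunnel t) :
    ‖xibar S.ξ i t‖ ≤ ‖deltaVec S.p S.vbar i‖ := by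
  refine EuclideanSpace.norm_le_norm_of_abs_le fun j => ?_
  have hj : j.1 + 1 ∈ Finset.Icc 1 S.n :=
    Finset.mem_Icc.2 ⟨by omega, by have := (Finset.mem_Icc.1 hi).2; omega⟩
  exact (S.abs_ξ_le hj ht (hP _ hj)).trans (le_abs_self _)

theorem abs_g_le (hi : i ∈ Finset.Icc 1 S.n) (x : EuclideanSpace ℝ (Fin i)) :
    |S.g i x| ≤ S.ghi i := by
  obtain ⟨hlo, hhi⟩ := S.g_mem i hi x
  exact abs_le.2 ⟨by linarith [S.glo_nonneg i hi], hhi⟩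

theorem abs_g_mul_le (hi : i ∈ Finset.Icc 1 S.n) (x : EuclideanSpace ℝ (Fin i)) {y b : ℝ}
    (hy : |y| ≤ b) : |S.g i x * y| ≤ S.ghi i * b := by
  rw [abs_mul]
  exact mul_le_mul (S.abs_g_le hi x) hy (abs_nonneg _) ((abs_nonneg _).trans (S.abs_g_le hi x))

theorem abs_f_add_d_le (hi : i ∈ Finset.Icc 1 S.n) (ht : 0 ≤ t) (hP : S.InFunnel t) :
    |S.f i (xibar S.ξ i t) + S.d i t| ≤ S.k i * ‖deltaVec S.p S.vbar i‖ + S.dbar i := by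
  refine (abs_add_le _ _).trans (add_le_add ?_ (S.abs_d_le i hi t ht))
  exact (S.abs_f_le i hi _).trans
    (mul_le_mul_of_nonneg_left (S.norm_xibar_le hi ht hP) (S.k_nonneg i hi))

theorem exists_hasDerivAt_z (hi : i ∈ Finset.Icc 1 S.n) (ht : 0 ≤ t) (hP : S.InFunnel t)
    {u' : ℝ} (hu : HasDerivAt (S.υ (i - 1)) u' t) (hu' : |u'| ≤ S.r (i - 1)) :
    ∃ e, HasDerivAt (S.z i) (e + S.g i (xibar S.ξ i t) * S.υ i t) t ∧
      |e| ≤ S.φ i - S.ghi i * S.vbar i := by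
  have hz : HasDerivAt (S.z i) (S.ξ' i t - u') t := by
    rw [S.z_eq i hi]; exact (S.hasDerivAt_ξ i hi t ht).sub hu
  have hfd := S.abs_f_add_d_le hi ht hP
  obtain ⟨hi1, hin⟩ := Finset.mem_Icc.1 hi
  rcases hin.eq_or_lt with hin | hin
  · subst hin
    refine ⟨S.f S.n (xibar S.ξ S.n t) + S.d S.n t - u', ?_, ?_⟩
    · exact hz.congr_deriv (by rw [S.ξ'_eq_last t ht]; ring)
    · rw [S.φ_eq_last]
      linarith [abs_sub (S.f S.n (xibar S.ξ S.n t) + S.d S.n t) u']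
  · have hi' : i + 1 ∈ Finset.Icc 1 S.n := Finset.mem_Icc.2 ⟨by omega, hin⟩
    have hξ : S.ξ (i + 1) t = S.z (i + 1) t + S.υ i t := by rw [S.z_eq _ hi']; simp
    have hgz := S.abs_g_mul_le hi (xibar S.ξ i t) (S.abs_z_le_p hi' ht (hP _ hi'))
    refine ⟨S.f i (xibar S.ξ i t) + S.d i t - u' + S.g i (xibar S.ξ i t) * S.z (i + 1) t,
      ?_, ?_⟩
    · refine hz.congr_deriv ?_
      rw [S.ξ'_eq i (Finset.mem_Icc.2 ⟨hi1, by omega⟩) t ht, hξ]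
      ring
    · rw [S.φ_eq i (Finset.mem_Icc.2 ⟨hi1, by omega⟩)]
      have := abs_sub (S.f i (xibar S.ξ i t) + S.d i t) u'
      linarith [abs_add_le (S.f i (xibar S.ξ i t) + S.d i t - u')
        (S.g i (xibar S.ξ i t) * S.z (i + 1) t)]

theorem exists_hasDerivAt_υ_of_hasDerivAt_z (hi : i ∈ Finset.Icc 1 S.n) (ht : 0 ≤ t)
    (hzψ : |S.z i t| < S.ψ i t) {z' : ℝ} (hz : HasDerivAt (S.z i) z' t)
    (hz' : |z'| ≤ S.φ i) :
    ∃ u', HasDerivAt (S.υ i) u' t ∧ |u'| ≤ S.r i := by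
  have hθ : S.θ i = fun s => S.z i s / perfFun (S.p i) (S.q i) (S.μ i) s := by
    rw [S.θ_eq i hi, S.ψ_eq i hi]
  rw [S.ψ_eq i hi] at hzψ
  obtain ⟨θ', hθd, hθ'⟩ := exists_hasDerivAt_div_perfFun (S.q_pos i hi) (S.q_le_p i hi)
    (S.μ_nonneg i hi) ht hz hz' hzψ.le
  rw [← hθ] at hθd
  obtain ⟨D, hD, hD'⟩ := exists_hasDerivAt_controlLaw (c := S.c i) (S.vbar_pos i hi).le
    (S.c_pos i hi) (S.abs_θ_lt_one hi (by rwa [S.ψ_eq i hi]))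
  refine ⟨D * θ', by rw [S.υ_eq i hi]; exact hD.comp t hθd, ?_⟩
  rw [S.r_eq i hi, abs_mul, mul_comm]
  exact mul_le_mul hθ' hD' (abs_nonneg _) ((abs_nonneg _).trans hθ')

theorem exists_hasDerivAt_υ (ht : 0 ≤ t) (hP : S.InFunnel t) :
    ∀ j ≤ S.n, ∃ u', HasDerivAt (S.υ j) u' t ∧ |u'| ≤ S.r j
  | 0, _ => S.exists_hasDerivAt_υ_zero t ht
  | j + 1, hj => by
    have hi : j + 1 ∈ Finset.Icc 1 S.n := Finset.mem_Icc.2 ⟨by omega, hj⟩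
    obtain ⟨u', hu, hu'⟩ := exists_hasDerivAt_υ ht hP j (by omega)
    obtain ⟨e, hz, he⟩ := S.exists_hasDerivAt_z hi ht hP hu hu'
    refine S.exists_hasDerivAt_υ_of_hasDerivAt_z hi ht (hP _ hi) hz ?_
    have hgυ := S.abs_g_mul_le hi (xibar S.ξ (j + 1) t) (S.abs_υ_lt hi t).le
    linarith [abs_add_le e (S.g (j + 1) (xibar S.ξ (j + 1) t) * S.υ (j + 1) t)]

theorem exists_hasDerivAt_abs_z (hi : i ∈ Finset.Icc 1 S.n) (hz0 : S.z i t ≠ 0) {e : ℝ}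
    (hz : HasDerivAt (S.z i) (e + S.g i (xibar S.ξ i t) * S.υ i t) t) :
    ∃ σ : ℝ, |σ| = 1 ∧ HasDerivAt (fun s => |S.z i s|)
      (σ * e + S.g i (xibar S.ξ i t) * controlLaw (S.vbar i) (S.c i) |S.θ i t|) t := by
  have hυ : S.υ i t = controlLaw (S.vbar i) (S.c i) (S.θ i t) := by rw [S.υ_eq i hi]
  have hθz : S.θ i t = S.z i t / S.ψ i t := by rw [S.θ_eq i hi]
  rcases hz0.lt_or_gt with hneg | hpos
  · have hθ : |S.θ i t| = -S.θ i t :=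
      abs_of_neg (hθz ▸ div_neg_of_neg_of_pos hneg (S.ψ_pos hi t))
    refine ⟨-1, by norm_num, ((hasDerivAt_abs_neg hneg).comp t hz).congr_deriv ?_⟩
    rw [hθ, controlLaw_neg, ← hυ]
    ring
  · have hθ : |S.θ i t| = S.θ i t := abs_of_pos (hθz ▸ div_pos hpos (S.ψ_pos hi t))
    refine ⟨1, by norm_num, ((hasDerivAt_abs_pos hpos).comp t hz).congr_deriv ?_⟩
    rw [hθ, ← hυ]
    ring

theorem barrier (hi : i ∈ Finset.Icc 1 S.n) :
    ∃ ρ < 1, ∀ t, 0 ≤ t → S.InFunnel t → ρ < |S.θ i t| →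
      ∃ D < 0, HasDerivAt (fun s => |S.z i s| - S.ψ i s) D t := by
  set B := S.φ i - S.ghi i * S.vbar i
  set M := S.μ i * (S.p i - S.q i)
  -- the feasibility condition: the control authority `glo i * vbar i` beats the worst drift `B`
  -- of `z i` plus the shrinking rate `M` of the funnel
  have hslack : B + M < S.glo i * S.vbar i := by linarith [S.feasible i hi]
  have hlim := tendsto_controlLaw_nhdsLT_one (v := S.vbar i) (S.c_pos i hi)
  have hev : ∀ᶠ x in 𝓝[<] (1 : ℝ), controlLaw (S.vbar i) (S.c i) x < 0 ∧
      S.glo i * controlLaw (S.vbar i) (S.c i) x < -(B + M) :=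
    (hlim.eventually (gt_mem_nhds (by linarith [S.vbar_pos i hi]))).and
      ((hlim.const_mul (S.glo i)).eventually (gt_mem_nhds (by linarith)))
  obtain ⟨ρ, hρ1, hρ⟩ := mem_nhdsLT_iff_exists_Ioo_subset.1 hev
  refine ⟨max ρ 0, max_lt hρ1 one_pos, fun t ht hP hθρ => ?_⟩
  obtain ⟨hu_neg, hu_lt⟩ :=
    hρ ⟨(le_max_left _ _).trans_lt hθρ, S.abs_θ_lt_one hi (hP i hi)⟩
  have hz0 : S.z i t ≠ 0 := by
    intro h0
    simp only [S.θ_eq i hi, h0, zero_div, abs_zero] at hθρ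
    exact (le_max_right ρ 0).not_gt hθρ
  obtain ⟨u', hu, hu'⟩ :=
    S.exists_hasDerivAt_υ ht hP (i - 1) (by have := (Finset.mem_Icc.1 hi).2; omega)
  obtain ⟨e, hz, he⟩ := S.exists_hasDerivAt_z hi ht hP hu hu'
  obtain ⟨σ, hσ, hzabs⟩ := S.exists_hasDerivAt_abs_z hi hz0 hz
  have hψ : HasDerivAt (S.ψ i) (-S.μ i * ((S.p i - S.q i) * exp (-S.μ i * t))) t := by
    rw [S.ψ_eq i hi]; exact hasDerivAt_perfFun t
  refine ⟨_, ?_, hzabs.sub hψ⟩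
  have hσe : σ * e ≤ B := (le_abs_self _).trans (by rw [abs_mul, hσ, one_mul]; exact he)
  have hgu := mul_le_mul_of_nonpos_right (S.g_mem i hi (xibar S.ξ i t)).1 hu_neg.le
  have hdecay := perfFun_decay_le (S.q_le_p i hi) (S.μ_nonneg i hi) ht
  linarith

theorem continuousAt_θ (hi : i ∈ Finset.Icc 1 S.n) (hz : ContinuousAt (S.z i) τ) :
    ContinuousAt (S.θ i) τ := by
  rw [S.θ_eq i hi]
  exact hz.div (S.continuous_ψ hi).continuousAt (S.ψ_pos hi τ).ne'

theorem continuousAt_υ (hi : i ∈ Finset.Icc 1 S.n) (hz : ContinuousAt (S.z i) τ)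
    (hzψ : |S.z i τ| < S.ψ i τ) : ContinuousAt (S.υ i) τ := by
  obtain ⟨D, hD, -⟩ := exists_hasDerivAt_controlLaw (S.vbar_pos i hi).le (S.c_pos i hi)
    (S.abs_θ_lt_one hi hzψ)
  rw [S.υ_eq i hi]
  exact hD.continuousAt.comp (x := τ) (S.continuousAt_θ hi hz)

theorem continuousAt_z (hτ : 0 ≤ τ) (i : ℕ) (hi : i ∈ Finset.Icc 1 S.n)
    (hbelow : ∀ l ∈ Finset.Icc 1 S.n, l < i → |S.z l τ| < S.ψ l τ) :
    ContinuousAt (S.z i) τ := by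
  induction i using Nat.strong_induction_on with
  | _ i ih =>
  rw [S.z_eq i hi]
  refine (S.hasDerivAt_ξ i hi τ hτ).continuousAt.sub ?_
  obtain ⟨hi1, hin⟩ := Finset.mem_Icc.1 hi
  rcases hi1.eq_or_lt with rfl | hi1
  · obtain ⟨u', hu, -⟩ := S.exists_hasDerivAt_υ_zero τ hτ
    exact hu.continuousAt
  · have hl : i - 1 ∈ Finset.Icc 1 S.n := Finset.mem_Icc.2 ⟨by omega, by omega⟩
    exact S.continuousAt_υ hl (ih (i - 1) (by omega) hl fun l hl' _ => hbelow l hl' (by omega))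
      (hbelow _ hl (by omega))

theorem eventually_inFunnel (hτ : 0 ≤ τ) (hP : S.InFunnel τ) :
    ∀ᶠ s in 𝓝 τ, S.InFunnel s :=
  Filter.eventually_all_finset _ |>.2 fun i hi =>
    (S.continuousAt_z hτ i hi fun l hl _ => hP l hl).abs.eventually_lt
      (S.continuous_ψ hi).continuousAt (hP i hi)

theorem inFunnel_of_forall_Ico (hinit : S.InFunnel 0) (hτ : 0 ≤ τ)
    (hbefore : ∀ s ∈ Ico 0 τ, S.InFunnel s) : S.InFunnel τ := by
  rcases hτ.eq_or_lt with rfl | hτ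
  · exact hinit
  intro i hi
  induction i using Nat.strong_induction_on with
  | _ i ih =>
  have hz := S.continuousAt_z hτ.le i hi fun l hl hli => ih l hli hl
  by_contra! hge
  obtain ⟨ρ, hρ1, hρ⟩ := S.barrier hi
  have hθτ : 1 ≤ |S.θ i τ| := by
    rw [S.θ_eq i hi, abs_div, abs_of_pos (S.ψ_pos hi τ)]
    exact (one_le_div (S.ψ_pos hi τ)).2 hge
  have hθ : ∀ᶠ s in 𝓝[<] τ, ρ < |S.θ i s| :=
    ((S.continuousAt_θ hi hz).abs.eventually (lt_mem_nhds (hρ1.trans_le hθτ))).filter_mono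
      nhdsWithin_le_nhds
  have hlt := neg_of_eventually_hasDerivAt_neg (h := fun s => |S.z i s| - S.ψ i s)
    (hz.abs.sub (S.continuous_ψ hi).continuousAt) <| by
      filter_upwards [hθ, Ioo_mem_nhdsLT hτ] with s hθs hs
      have hPs := hbefore s ⟨hs.1.le, hs.2⟩
      exact ⟨sub_neg.2 (hPs i hi), hρ s hs.1.le hPs hθs⟩
  linarith

theorem inFunnel (hinit : S.InFunnel 0) : ∀ t ≥ 0, S.InFunnel t :=
  forall_ge_of_continuous_induction (fun _ hτ => S.inFunnel_of_forall_Ico hinit hτ)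
    fun _ hτ hP => (S.eventually_inFunnel hτ hP).filter_mono nhdsWithin_le_nhds

theorem exists_bound (hfunnel : ∀ t ≥ 0, S.InFunnel t) (hi : i ∈ Finset.Icc 1 S.n) :
    ∃ M : ℝ, ∀ t : ℝ, 0 ≤ t →
      |S.ξ i t| ≤ M ∧ |S.z i t| ≤ M ∧ |S.θ i t| ≤ M ∧ |S.υ i t| ≤ M := by
  refine ⟨max (S.p i + S.vbar (i - 1)) (max (S.p i) (max 1 (S.vbar i))), fun t ht => ?_⟩
  have hz := hfunnel t ht i hi
  refine ⟨(S.abs_ξ_le hi ht hz).trans (le_max_left _ _), ?_, ?_, ?_⟩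
  · exact (S.abs_z_le_p hi ht hz).trans (by simp)
  · exact (S.abs_θ_lt_one hi hz).le.trans (by simp)
  · exact (S.abs_υ_lt hi t).le.trans (by simp)

end ClosedLoop

theorem approximation_free_control_main_general
    (n : ℕ) (hn : 1 ≤ n)
    (k glo ghi dbar p q μ vbar c : ℕ → ℝ)
    (f g : (i : ℕ) → EuclideanSpace ℝ (Fin i) → ℝ)
    (d : ℕ → ℝ → ℝ)
    (yd yd' : ℝ → ℝ) (r₀ : ℝ)
    (ξ ξ' υ z θ ψ : ℕ → ℝ → ℝ)
    (φ r : ℕ → ℝ)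
    -- assumptions on the unknown system maps
    (hk : ∀ i ∈ Finset.Icc 1 n, 0 ≤ k i)
    (hf : ∀ i ∈ Finset.Icc 1 n, ∀ x : EuclideanSpace ℝ (Fin i), |f i x| ≤ k i * ‖x‖)
    (hglo : ∀ i ∈ Finset.Icc 1 n, 0 ≤ glo i)
    (hg : ∀ i ∈ Finset.Icc 1 n, ∀ x : EuclideanSpace ℝ (Fin i),
      glo i ≤ g i x ∧ g i x ≤ ghi i)
    (hd : ∀ i ∈ Finset.Icc 1 n, ∀ t : ℝ, 0 ≤ t → |d i t| ≤ dbar i)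
    -- the desired output is continuously differentiable and bounded
    (hyd : ∀ t : ℝ, 0 ≤ t → HasDerivAt yd (yd' t) t)
    (hydbd : ∀ t : ℝ, 0 ≤ t → |yd t| ≤ vbar 0)
    (hyd'bd : ∀ t : ℝ, 0 ≤ t → |yd' t| ≤ r₀)
    -- performance functions
    (hq : ∀ i ∈ Finset.Icc 1 n, 0 < q i)
    (hpq : ∀ i ∈ Finset.Icc 1 n, q i ≤ p i)
    (hμ : ∀ i ∈ Finset.Icc 1 n, 0 < μ i)
    (hψ : ∀ i ∈ Finset.Icc 1 n, ∀ t : ℝ, ψ i t = (p i - q i) * Real.exp (-(μ i) * t) + q i)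
    -- controller (recursive definition, `υ 0 = y_d`)
    (hvbar : ∀ i ∈ Finset.Icc 1 n, 0 < vbar i)
    (hc : ∀ i ∈ Finset.Icc 1 n, 0 < c i)
    (hυ0 : ∀ t : ℝ, υ 0 t = yd t)
    (hz : ∀ i ∈ Finset.Icc 1 n, ∀ t : ℝ, z i t = ξ i t - υ (i - 1) t)
    (hθ : ∀ i ∈ Finset.Icc 1 n, ∀ t : ℝ, θ i t = z i t / ψ i t)
    (hυ : ∀ i ∈ Finset.Icc 1 n, ∀ t : ℝ,
      υ i t = -(2 * vbar i / π) * Real.arctan (π / (2 * c i) * Real.tan (π / 2 * θ i t)))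
    -- state dynamics: `ξ` is continuously differentiable and satisfies the ODE
    (hξ : ∀ i ∈ Finset.Icc 1 n, ∀ t : ℝ, 0 ≤ t → HasDerivAt (ξ i) (ξ' i t) t)
    (hdyn : ∀ i ∈ Finset.Icc 1 (n - 1), ∀ t : ℝ, 0 ≤ t →
      ξ' i t = f i (xibar ξ i t) + g i (xibar ξ i t) * ξ (i + 1) t + d i t)
    (hdynn : ∀ t : ℝ, 0 ≤ t →
      ξ' n t = f n (xibar ξ n t) + g n (xibar ξ n t) * υ n t + d n t)
    -- feasibility constants `φ i` and `r i` (with `r 0 = r₀`)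
    (hr0 : r 0 = r₀)
    (hφ : ∀ i ∈ Finset.Icc 1 (n - 1),
      φ i = k i * ‖deltaVec p vbar i‖ + dbar i + ghi i * p (i + 1) + ghi i * vbar i + r (i - 1))
    (hφn : φ n = k n * ‖deltaVec p vbar n‖ + dbar n + ghi n * vbar n + r (n - 1))
    (hr : ∀ i ∈ Finset.Icc 1 n,
      r i = (φ i / q i + μ i * (p i - q i) / p i) *
        max (π * vbar i / (2 * c i)) (2 * vbar i * c i / π))
    -- feasibility conditions
    (hfeas : ∀ i ∈ Finset.Icc 1 n, φ i < (ghi i + glo i) * vbar i + μ i * (q i - p i))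
    -- initial conditions
    (hinit : ∀ i ∈ Finset.Icc 1 n, |z i 0| < ψ i 0) :
    (∀ t : ℝ, 0 ≤ t → ∀ i ∈ Finset.Icc 1 n, |z i t| < ψ i t) ∧
    (∀ t : ℝ, 0 ≤ t → |z 1 t| < ψ 1 t) ∧
    (∀ t : ℝ, 0 ≤ t → |υ n t| < vbar n) ∧
    (∀ i ∈ Finset.Icc 1 n, ∃ M : ℝ, ∀ t : ℝ, 0 ≤ t →
      |ξ i t| ≤ M ∧ |z i t| ≤ M ∧ |θ i t| ≤ M ∧ |υ i t| ≤ M) := by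
  let S : ClosedLoop :=
    { n, k, glo, ghi, dbar, p, q, μ, vbar, c, f, g, d, ξ, ξ', υ, z, θ, ψ, φ, r
      k_nonneg := hk, abs_f_le := hf, glo_nonneg := hglo, g_mem := hg, abs_d_le := hd
      abs_υ_zero_le := fun t ht => (hυ0 t).symm ▸ hydbd t ht
      exists_hasDerivAt_υ_zero := fun t ht =>
        ⟨yd' t, funext hυ0 ▸ hyd t ht, hr0 ▸ hyd'bd t ht⟩
      q_pos := hq, q_le_p := hpq, μ_nonneg := fun i hi => (hμ i hi).le
      ψ_eq := fun i hi => funext (hψ i hi), vbar_pos := hvbar, c_pos := hc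
      z_eq := fun i hi => funext (hz i hi), θ_eq := fun i hi => funext (hθ i hi)
      υ_eq := fun i hi => funext (hυ i hi), hasDerivAt_ξ := hξ
      ξ'_eq := hdyn, ξ'_eq_last := hdynn
      φ_eq := hφ, φ_eq_last := hφn, r_eq := hr, feasible := hfeas }
  have hfunnel := S.inFunnel hinit
  have hn' : n ∈ Finset.Icc 1 n := Finset.mem_Icc.2 ⟨hn, le_rfl⟩
  exact ⟨hfunnel, fun t ht => hfunnel t ht 1 (Finset.mem_Icc.2 ⟨le_rfl, hn⟩),
    fun t _ => S.abs_υ_lt hn' t, fun i hi => S.exists_bound hfunnel hi⟩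

/-- Theorem 1: For the closed-loop system (pure-feedback system of
order `n ≥ 1` with Lipschitz-bounded unknown drifts `f i`, bounded control
coefficients `g i`, bounded disturbances `d i`, performance functions `ψ i`, and
the recursively defined backstepping errors `z i`, normalized errors `θ i` and
arctan-tan controller inputs `υ i`, where `υ 0 = y_d`, together with the mutually
recursive feasibility constants `φ i`, `r i` where `r 0 = r₀`): if the feasibility
conditions `φ_i < (ḡ_i + g̲_i)·v̄_i + μ_i·(q_i − p_i)` hold for every
`i ∈ {1,…,n}` and the initial conditions satisfy `|z_i(0)| < ψ_i(0)` for every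
`i ∈ {1,…,n}`, then `|z_i(t)| < ψ_i(t)` for all `t ≥ 0` and `i ∈ {1,…,n}`; in
particular `|z_1(t)| < ψ_1(t)` for all `t ≥ 0`, the control input satisfies
`|υ_n(t)| < v̄_n` for all `t ≥ 0`, and all closed-loop signals `ξ_i, z_i, θ_i, υ_i`
are bounded on `[0, ∞)`. -/
theorem approximation_free_control_main
    (n : ℕ) (hn : 1 ≤ n)
    (k glo ghi dbar p q μ vbar c : ℕ → ℝ)
    (f g : (i : ℕ) → EuclideanSpace ℝ (Fin i) → ℝ)
    (d : ℕ → ℝ → ℝ)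
    (yd yd' : ℝ → ℝ) (r₀ : ℝ)
    (ξ ξ' υ z θ ψ : ℕ → ℝ → ℝ)
    (φ r : ℕ → ℝ)
    -- assumptions on the unknown system maps
    (hk : ∀ i ∈ Finset.Icc 1 n, 0 ≤ k i)
    (hf : ∀ i ∈ Finset.Icc 1 n, ∀ x : EuclideanSpace ℝ (Fin i), |f i x| ≤ k i * ‖x‖)
    (hglo : ∀ i ∈ Finset.Icc 1 n, 0 ≤ glo i)
    (hgord : ∀ i ∈ Finset.Icc 1 n, glo i ≤ ghi i)
    (hg : ∀ i ∈ Finset.Icc 1 n, ∀ x : EuclideanSpace ℝ (Fin i),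
      glo i ≤ g i x ∧ g i x ≤ ghi i)
    (hdbar : ∀ i ∈ Finset.Icc 1 n, 0 ≤ dbar i)
    (hd : ∀ i ∈ Finset.Icc 1 n, ∀ t : ℝ, 0 ≤ t → |d i t| ≤ dbar i)
    -- the desired output is continuously differentiable and bounded
    (hvbar0 : 0 < vbar 0) (hr₀ : 0 < r₀)
    (hyd : ∀ t : ℝ, 0 ≤ t → HasDerivAt yd (yd' t) t)
    (hyd'cont : ContinuousOn yd' (Ici 0))
    (hydbd : ∀ t : ℝ, 0 ≤ t → |yd t| ≤ vbar 0)
    (hyd'bd : ∀ t : ℝ, 0 ≤ t → |yd' t| ≤ r₀)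
    -- performance functions
    (hq : ∀ i ∈ Finset.Icc 1 n, 0 < q i)
    (hpq : ∀ i ∈ Finset.Icc 1 n, q i ≤ p i)
    (hμ : ∀ i ∈ Finset.Icc 1 n, 0 < μ i)
    (hψ : ∀ i ∈ Finset.Icc 1 n, ∀ t : ℝ, ψ i t = (p i - q i) * Real.exp (-(μ i) * t) + q i)
    -- controller (recursive definition, `υ 0 = y_d`)
    (hvbar : ∀ i ∈ Finset.Icc 1 n, 0 < vbar i)
    (hc : ∀ i ∈ Finset.Icc 1 n, 0 < c i)
    (hυ0 : ∀ t : ℝ, υ 0 t = yd t)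
    (hz : ∀ i ∈ Finset.Icc 1 n, ∀ t : ℝ, z i t = ξ i t - υ (i - 1) t)
    (hθ : ∀ i ∈ Finset.Icc 1 n, ∀ t : ℝ, θ i t = z i t / ψ i t)
    (hυ : ∀ i ∈ Finset.Icc 1 n, ∀ t : ℝ,
      υ i t = -(2 * vbar i / π) * Real.arctan (π / (2 * c i) * Real.tan (π / 2 * θ i t)))
    -- state dynamics: `ξ` is continuously differentiable and satisfies the ODE
    (hξ : ∀ i ∈ Finset.Icc 1 n, ∀ t : ℝ, 0 ≤ t → HasDerivAt (ξ i) (ξ' i t) t)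
    (hξ'cont : ∀ i ∈ Finset.Icc 1 n, ContinuousOn (ξ' i) (Ici 0))
    (hdyn : ∀ i ∈ Finset.Icc 1 (n - 1), ∀ t : ℝ, 0 ≤ t →
      ξ' i t = f i (xibar ξ i t) + g i (xibar ξ i t) * ξ (i + 1) t + d i t)
    (hdynn : ∀ t : ℝ, 0 ≤ t →
      ξ' n t = f n (xibar ξ n t) + g n (xibar ξ n t) * υ n t + d n t)
    -- feasibility constants `φ i` and `r i` (with `r 0 = r₀`)
    (hr0 : r 0 = r₀)
    (hφ : ∀ i ∈ Finset.Icc 1 (n - 1),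
      φ i = k i * ‖deltaVec p vbar i‖ + dbar i + ghi i * p (i + 1) + ghi i * vbar i + r (i - 1))
    (hφn : φ n = k n * ‖deltaVec p vbar n‖ + dbar n + ghi n * vbar n + r (n - 1))
    (hr : ∀ i ∈ Finset.Icc 1 n,
      r i = (φ i / q i + μ i * (p i - q i) / p i) *
        max (π * vbar i / (2 * c i)) (2 * vbar i * c i / π))
    -- feasibility conditions
    (hfeas : ∀ i ∈ Finset.Icc 1 n, φ i < (ghi i + glo i) * vbar i + μ i * (q i - p i))
    -- initial conditions
    (hinit : ∀ i ∈ Finset.Icc 1 n, |z i 0| < ψ i 0) :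
    (∀ t : ℝ, 0 ≤ t → ∀ i ∈ Finset.Icc 1 n, |z i t| < ψ i t) ∧
    (∀ t : ℝ, 0 ≤ t → |z 1 t| < ψ 1 t) ∧
    (∀ t : ℝ, 0 ≤ t → |υ n t| < vbar n) ∧
    (∀ i ∈ Finset.Icc 1 n, ∃ M : ℝ, ∀ t : ℝ, 0 ≤ t →
      |ξ i t| ≤ M ∧ |z i t| ≤ M ∧ |θ i t| ≤ M ∧ |υ i t| ≤ M) :=
  approximation_free_control_main_general n hn k glo ghi dbar p q μ vbar c f g d yd yd' r₀ ξ ξ' υ z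
    θ ψ φ r hk hf hglo hg hd hyd hydbd hyd'bd hq hpq hμ hψ hvbar hc hυ0 hz hθ hυ hξ hdyn hdynn hr0
    hφ hφn hr hfeas hinit
end

section
/- If 0 < c < π/2, then for every θ ∈ (−1, 1) the derivative of the controller map satisfies −π·v̄/(2·c) ≤ υ'(θ) < −2·v̄·c/π, and the value −π·v̄/(2·c) is attained at θ = 0. -/
open Real

/-!
With `k = π / (2c)` and `t = tan (πθ/2)`, the chain rule and `1 / cos² = 1 + tan²` give
`υ'(θ) = -v̄ k (1 + t²) / (1 + k² t²)`. For `k > 1` the ratio `(1 + t²) / (1 + k² t²)` lies in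
`(1 / k², 1]` and equals `1` at `t = 0`, which is exactly the claimed range since
`v̄ k = π v̄ / (2c)` and `v̄ / k = 2 v̄ c / π`.
-/

noncomputable def controllerMap (vbar c θ : ℝ) : ℝ :=
  -(2 * vbar / π) * arctan (π / (2 * c) * tan (π / 2 * θ))

lemma hasDerivAt_arctan_const_mul_tan_const_mul {k a x : ℝ} (hx : cos (a * x) ≠ 0) :
    HasDerivAt (fun y => arctan (k * tan (a * y)))
      (k * a * ((1 + tan (a * x) ^ 2) / (1 + (k * tan (a * x)) ^ 2))) x := by
  have hlin : HasDerivAt (fun y => a * y) a x := by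
    simpa using (hasDerivAt_id x).const_mul a
  have h := (hasDerivAt_arctan _).comp x (((hasDerivAt_tan hx).comp x hlin).const_mul k)
  refine h.congr_deriv ?_
  simp only [Function.comp_apply, one_div, ← inv_one_add_tan_sq hx, inv_inv]
  ring

lemma one_add_sq_div_one_add_mul_sq_le_one {k : ℝ} (hk : 1 ≤ k ^ 2) (t : ℝ) :
    (1 + t ^ 2) / (1 + (k * t) ^ 2) ≤ 1 := by
  rw [div_le_one (by positivity)]
  nlinarith [mul_le_mul_of_nonneg_right hk (sq_nonneg t)]

lemma inv_sq_lt_one_add_sq_div_one_add_mul_sq {k : ℝ} (hk : 1 < k ^ 2) (t : ℝ) :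
    (k ^ 2)⁻¹ < (1 + t ^ 2) / (1 + (k * t) ^ 2) := by
  rw [inv_eq_one_div, div_lt_div_iff₀ (by linarith) (by positivity)]
  nlinarith

lemma deriv_controllerMap (vbar c : ℝ) {θ : ℝ} (hθ : θ ∈ Set.Ioo (-1 : ℝ) 1) :
    deriv (controllerMap vbar c) θ = -(vbar * (π / (2 * c))) *
      ((1 + tan (π / 2 * θ) ^ 2) / (1 + (π / (2 * c) * tan (π / 2 * θ)) ^ 2)) := by
  have hcos : cos (π / 2 * θ) ≠ 0 := by
    refine (cos_pos_of_mem_Ioo ⟨?_, ?_⟩).ne' <;> nlinarith [hθ.1, hθ.2, pi_pos]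
  unfold controllerMap
  rw [((hasDerivAt_arctan_const_mul_tan_const_mul (k := π / (2 * c)) hcos).const_mul
    (-(2 * vbar / π))).deriv]
  field_simp [pi_ne_zero]

/-- If `0 < c < π/2`, then for every `θ ∈ (−1, 1)` the derivative of
the controller map `υ(θ) = −(2·v̄/π)·arctan((π/(2·c))·tan((π/2)·θ))` (with `v̄ > 0`)
satisfies `−π·v̄/(2·c) ≤ υ'(θ) < −2·v̄·c/π`, and the value `−π·v̄/(2·c)` is attained
at `θ = 0`. -/
theorem controller_map_deriv_range_small_c (vbar c : ℝ) (hv : 0 < vbar)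
    (hc : 0 < c) (hcπ : c < π / 2) :
    (∀ θ ∈ Set.Ioo (-1 : ℝ) 1,
      -(π * vbar / (2 * c)) ≤
        deriv (fun x : ℝ => -(2 * vbar / π) * Real.arctan (π / (2 * c) * Real.tan (π / 2 * x))) θ ∧
      deriv (fun x : ℝ => -(2 * vbar / π) * Real.arctan (π / (2 * c) * Real.tan (π / 2 * x))) θ
        < -(2 * vbar * c / π)) ∧
    deriv (fun x : ℝ => -(2 * vbar / π) * Real.arctan (π / (2 * c) * Real.tan (π / 2 * x))) 0
      = -(π * vbar / (2 * c)) := by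
  change (∀ θ ∈ Set.Ioo (-1 : ℝ) 1, _ ≤ deriv (controllerMap vbar c) θ ∧
    deriv (controllerMap vbar c) θ < _) ∧ deriv (controllerMap vbar c) 0 = _
  have hk : 1 < π / (2 * c) := by rw [lt_div_iff₀ (by positivity)]; linarith
  have hvk : 0 < vbar * (π / (2 * c)) := by positivity
  have hupper : π * vbar / (2 * c) = vbar * (π / (2 * c)) := by ring
  have hlower : 2 * vbar * c / π = vbar * (π / (2 * c)) * ((π / (2 * c)) ^ 2)⁻¹ := by
    field_simp
  refine ⟨fun θ hθ => ?_, ?_⟩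
  · rw [deriv_controllerMap vbar c hθ, hupper, hlower]
    constructor
    · nlinarith [one_add_sq_div_one_add_mul_sq_le_one (by nlinarith : 1 ≤ (π / (2 * c)) ^ 2)
        (tan (π / 2 * θ))]
    · nlinarith [inv_sq_lt_one_add_sq_div_one_add_mul_sq (by nlinarith : 1 < (π / (2 * c)) ^ 2)
        (tan (π / 2 * θ))]
  · rw [deriv_controllerMap vbar c ⟨by norm_num, by norm_num⟩, hupper]
    simp
end

section
/- Assume additionally p > q. Let z : ℝ → ℝ be differentiable at some t ≥ 0 with |z(t)/ψ(t)| < 1 and |z'(t)| ≤ A for a constant A ≥ 0. Then the normalized error θ := z/ψ is differentiable at t with θ'(t) = (z'(t) − θ(t)·ψ'(t))/ψ(t), and |θ'(t)| < A/q + μ·(p − q)/p. -/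
open Real

/-- For the performance function `ψ(t) = (p − q)·exp(−μ·t) + q`
(with `0 < q ≤ p`, `μ > 0`, additionally `p > q`): if `z` is differentiable at
some `t ≥ 0` with `|z(t)/ψ(t)| < 1` and `|z'(t)| ≤ A` for a constant `A ≥ 0`,
then the normalized error `θ = z/ψ` is differentiable at `t` with
`θ'(t) = (z'(t) − θ(t)·ψ'(t))/ψ(t)` and `|θ'(t)| < A/q + μ·(p − q)/p`. -/
theorem normalized_error_deriv_bound (p q μ A : ℝ) (hq : 0 < q) (hpq : q ≤ p)
    (hμ : 0 < μ) (hpq' : q < p) (hA : 0 ≤ A)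
    (z : ℝ → ℝ) (t : ℝ) (ht : 0 ≤ t)
    (hz : DifferentiableAt ℝ z t)
    (hθt : |z t / ((p - q) * Real.exp (-μ * t) + q)| < 1)
    (hz' : |deriv z t| ≤ A) :
    HasDerivAt (fun s : ℝ => z s / ((p - q) * Real.exp (-μ * s) + q))
      ((deriv z t - (z t / ((p - q) * Real.exp (-μ * t) + q)) *
          deriv (fun s : ℝ => (p - q) * Real.exp (-μ * s) + q) t) /
        ((p - q) * Real.exp (-μ * t) + q)) t ∧
    |(deriv z t - (z t / ((p - q) * Real.exp (-μ * t) + q)) *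
          deriv (fun s : ℝ => (p - q) * Real.exp (-μ * s) + q) t) /
        ((p - q) * Real.exp (-μ * t) + q)| < A / q + μ * (p - q) / p := by
  set E := Real.exp (-μ * t) with hEdef
  have hE : 0 < E := Real.exp_pos _
  have hE1 : E ≤ 1 := Real.exp_le_one_iff.mpr (by nlinarith)
  have hp : 0 < p := lt_of_le_of_lt hq.le (lt_of_le_of_lt (le_refl q) hpq')
  have hψ : 0 < (p - q) * E + q := by nlinarith
  -- derivative of ψ
  have h1 : HasDerivAt (fun s : ℝ => -μ * s) (-μ) t := by
    simpa using (hasDerivAt_id t).const_mul (-μ)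
  have h2 : HasDerivAt (fun s : ℝ => Real.exp (-μ * s)) (E * (-μ)) t :=
    (Real.hasDerivAt_exp (-μ * t)).comp t h1
  have h3 : HasDerivAt (fun s : ℝ => (p - q) * Real.exp (-μ * s) + q)
      ((p - q) * (E * (-μ))) t := (h2.const_mul (p - q)).add_const q
  have hderψ : deriv (fun s : ℝ => (p - q) * Real.exp (-μ * s) + q) t
      = (p - q) * (E * (-μ)) := h3.deriv
  have hdiv : HasDerivAt (fun s : ℝ => z s / ((p - q) * Real.exp (-μ * s) + q))
      ((deriv z t * ((p - q) * E + q) - z t * ((p - q) * (E * (-μ)))) /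
        ((p - q) * E + q) ^ 2) t := hz.hasDerivAt.div h3 hψ.ne'
  have heq : (deriv z t * ((p - q) * E + q) - z t * ((p - q) * (E * (-μ)))) /
        ((p - q) * E + q) ^ 2
      = (deriv z t - (z t / ((p - q) * E + q)) * ((p - q) * (E * (-μ)))) /
        ((p - q) * E + q) := by
    rw [div_eq_div_iff (by positivity) hψ.ne']
    field_simp
  constructor
  · rw [hderψ]
    exact heq ▸ hdiv
  · rw [hderψ]
    rw [abs_div, abs_of_pos hψ]
    have hθ : |z t / ((p - q) * E + q)| < 1 := hθt
    have habsψ' : |(p - q) * (E * (-μ))| = μ * (p - q) * E := by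
      rw [abs_mul, abs_mul, abs_neg, abs_of_pos hμ, abs_of_pos hE,
        abs_of_pos (by linarith : (0:ℝ) < p - q)]
      ring
    have hnum : |deriv z t - (z t / ((p - q) * E + q)) * ((p - q) * (E * (-μ)))|
        < A + μ * (p - q) * E := by
      calc |deriv z t - (z t / ((p - q) * E + q)) * ((p - q) * (E * (-μ)))|
          ≤ |deriv z t| + |(z t / ((p - q) * E + q)) * ((p - q) * (E * (-μ)))| :=
            abs_sub _ _
        _ = |deriv z t| + |z t / ((p - q) * E + q)| * (μ * (p - q) * E) := by
            rw [abs_mul, habsψ']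
        _ < A + 1 * (μ * (p - q) * E) := by
            have hpos : 0 < μ * (p - q) * E := mul_pos (mul_pos hμ (by linarith)) hE
            exact add_lt_add_of_le_of_lt hz'
              (mul_lt_mul_of_pos_right hθ hpos)
        _ = A + μ * (p - q) * E := by ring
    have hstep : |deriv z t - (z t / ((p - q) * E + q)) * ((p - q) * (E * (-μ)))| /
        ((p - q) * E + q) < (A + μ * (p - q) * E) / ((p - q) * E + q) :=
      (div_lt_div_iff_of_pos_right hψ).mpr hnum
    refine hstep.trans_le ?_
    rw [div_add_div _ _ hq.ne' hp.ne', div_le_div_iff₀ hψ (by positivity)]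
    nlinarith [mul_nonneg (mul_nonneg hA hp.le) (mul_nonneg (by linarith : (0:ℝ) ≤ p - q) hE.le),
      mul_nonneg (mul_nonneg (mul_nonneg hμ.le (by linarith : (0:ℝ) ≤ p - q)) (mul_pos hq hq).le)
        (by linarith : (0:ℝ) ≤ 1 - E)]
end
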